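/- Let g : X ⥤ A be a functor between categories which is bijective on objects, and let h : X ⥤ B be a discrete opfibration. Define φ₀ on objects of A by φ₀(a) = h.obj((g.obj)⁻¹(a)), and for an object a of A and a morphism u : φ₀(a) ⟶ b of B define φ(a,u) := g.map of the unique h-lift of u at (g.obj)⁻¹(a), with p(a,u) := g.obj of the codomain of that lift. Then the data (φ₀, p, φ) is a cofunctor B ⇸ A. -/

import Mathlib

open CategoryTheory

/-- A functor is a discrete opfibration if every morphism out of the image of an object
has a unique lift. -/
def IsDiscreteOpfibration {X B : Type*} [Category X] [Category B] (h : X ⥤ B) : Prop :=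
  ∀ (x : X) (b : B) (u : h.obj x ⟶ b),
    ∃! w : Σ x' : X, (x ⟶ x'), ∃ e : h.obj w.1 = b, h.map w.2 ≫ eqToHom e = u

/-- A cofunctor `φ : B ⇸ A` between categories. -/
structure Cofunctor (B A : Type*) [Category B] [Category A] where
  obj : A → B
  p : ∀ (a : A) (b : B), (obj a ⟶ b) → A
  lift : ∀ (a : A) (b : B) (u : obj a ⟶ b), a ⟶ p a b u
  obj_p : ∀ (a : A) (b : B) (u : obj a ⟶ b), obj (p a b u) = b
  p_id : ∀ a : A, p a (obj a) (𝟙 (obj a)) = a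
  lift_id : ∀ a : A, lift a (obj a) (𝟙 (obj a)) ≫ eqToHom (p_id a) = 𝟙 a
  p_comp : ∀ (a : A) (b b' : B) (u : obj a ⟶ b) (v : b ⟶ b'),
    p a b' (u ≫ v) = p (p a b u) b' (eqToHom (obj_p a b u) ≫ v)
  lift_comp : ∀ (a : A) (b b' : B) (u : obj a ⟶ b) (v : b ⟶ b'),
    lift a b' (u ≫ v) ≫ eqToHom (p_comp a b b' u v) =
      lift a b u ≫ lift (p a b u) b' (eqToHom (obj_p a b u) ≫ v)

variable {X A B : Type*} [Category X] [Category A] [Category B]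

/-- The inverse of the object bijection of `g`. -/
noncomputable def gInv (g : X ⥤ A) (hg : Function.Bijective g.obj) : A → X :=
  (Equiv.ofBijective g.obj hg).symm

theorem gInv_spec (g : X ⥤ A) (hg : Function.Bijective g.obj) (a : A) :
    g.obj (gInv g hg a) = a :=
  (Equiv.ofBijective g.obj hg).apply_symm_apply a

/-- The object assignment `φ₀ : A → B` of the induced cofunctor:
`φ₀ a = h.obj ((g.obj)⁻¹ a)`. -/
noncomputable def spanObj (g : X ⥤ A) (h : X ⥤ B) (hg : Function.Bijective g.obj) :
    A → B :=
  fun a => h.obj (gInv g hg a)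

/-- The unique `h`-lift of `u` at `(g.obj)⁻¹ a`. -/
noncomputable def spanChosen (g : X ⥤ A) (h : X ⥤ B) (hg : Function.Bijective g.obj)
    (hh : IsDiscreteOpfibration h) (a : A) (b : B) (u : spanObj g h hg a ⟶ b) :
    Σ x' : X, (gInv g hg a ⟶ x') :=
  Classical.choose (hh (gInv g hg a) b u)

/-- The codomain assignment `p(a, u)` of the induced cofunctor. -/
noncomputable def spanP (g : X ⥤ A) (h : X ⥤ B) (hg : Function.Bijective g.obj)
    (hh : IsDiscreteOpfibration h) (a : A) (b : B) (u : spanObj g h hg a ⟶ b) : A :=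
  g.obj (spanChosen g h hg hh a b u).1

/-- The lift assignment `φ(a, u)` of the induced cofunctor. -/
noncomputable def spanLift (g : X ⥤ A) (h : X ⥤ B) (hg : Function.Bijective g.obj)
    (hh : IsDiscreteOpfibration h) (a : A) (b : B) (u : spanObj g h hg a ⟶ b) :
    a ⟶ spanP g h hg hh a b u :=
  eqToHom (gInv_spec g hg a).symm ≫ g.map (spanChosen g h hg hh a b u).2

/-! Uniqueness of `h`-lifts forces the lift of an identity to be the identity and the lift of a
composite to be the composite of the lifts; applying `g` turns these into the cofunctor laws.
The only friction is that `(g.obj)⁻¹ (g.obj x)` is `x` only propositionally, which is why the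
lemma on composite lifts lets the intermediate object be replaced by any object equal to it. -/

theorem CategoryTheory.Functor.map_snd_comp_eqToHom_of_eq (g : X ⥤ A) {x : X}
    {s t : Σ x' : X, (x ⟶ x')} (hst : s = t) {a : A} (e : g.obj s.1 = a) (e' : g.obj t.1 = a) :
    g.map s.2 ≫ eqToHom e = g.map t.2 ≫ eqToHom e' := by
  subst hst; rfl

theorem gInv_obj (g : X ⥤ A) (hg : Function.Bijective g.obj) (x : X) :
    gInv g hg (g.obj x) = x :=
  (Equiv.ofBijective g.obj hg).symm_apply_apply x

namespace IsDiscreteOpfibration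

variable {h : X ⥤ B} (hh : IsDiscreteOpfibration h)

noncomputable def liftSigma (x : X) (b : B) (u : h.obj x ⟶ b) : Σ x' : X, (x ⟶ x') :=
  Classical.choose (hh x b u)

theorem exists_map_liftSigma (x : X) (b : B) (u : h.obj x ⟶ b) :
    ∃ e : h.obj (hh.liftSigma x b u).1 = b, h.map (hh.liftSigma x b u).2 ≫ eqToHom e = u :=
  (Classical.choose_spec (hh x b u)).1

theorem liftSigma_eq {x : X} {b : B} {u : h.obj x ⟶ b} (w : Σ x' : X, (x ⟶ x'))
    (hw : ∃ e : h.obj w.1 = b, h.map w.2 ≫ eqToHom e = u) : hh.liftSigma x b u = w :=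
  ((Classical.choose_spec (hh x b u)).2 w hw).symm

theorem obj_liftSigma (x : X) (b : B) (u : h.obj x ⟶ b) : h.obj (hh.liftSigma x b u).1 = b :=
  (hh.exists_map_liftSigma x b u).1

theorem liftSigma_id (x : X) : hh.liftSigma x (h.obj x) (𝟙 _) = ⟨x, 𝟙 x⟩ :=
  hh.liftSigma_eq _ ⟨rfl, by simp⟩

theorem liftSigma_comp {x y : X} {b b' : B} (u : h.obj x ⟶ b) (v : b ⟶ b')
    (hy : (hh.liftSigma x b u).1 = y) (e : h.obj y = b) :
    hh.liftSigma x b' (u ≫ v) =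
      ⟨(hh.liftSigma y b' (eqToHom e ≫ v)).1,
        (hh.liftSigma x b u).2 ≫ eqToHom hy ≫ (hh.liftSigma y b' (eqToHom e ≫ v)).2⟩ := by
  obtain ⟨e₁, hu⟩ := hh.exists_map_liftSigma x b u
  obtain ⟨e₂, hv⟩ := hh.exists_map_liftSigma y b' (eqToHom e ≫ v)
  refine hh.liftSigma_eq _ ⟨e₂, ?_⟩
  simp only [Functor.map_comp, eqToHom_map, Category.assoc, hv, ← hu, eqToHom_trans_assoc]

end IsDiscreteOpfibration

section Span

variable (g : X ⥤ A) (h : X ⥤ B) (hg : Function.Bijective g.obj)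
  (hh : IsDiscreteOpfibration h)

theorem spanLift_comp_eqToHom_of_eq (a : A) (b : B) (u : spanObj g h hg a ⟶ b)
    {t : Σ x' : X, (gInv g hg a ⟶ x')} (ht : spanChosen g h hg hh a b u = t) {a' : A}
    (e : spanP g h hg hh a b u = a') (e' : g.obj t.1 = a') :
    spanLift g h hg hh a b u ≫ eqToHom e =
      eqToHom (gInv_spec g hg a).symm ≫ g.map t.2 ≫ eqToHom e' :=
  (Category.assoc _ _ _).trans (congrArg _ (g.map_snd_comp_eqToHom_of_eq ht e e'))

theorem spanObj_spanP (a : A) (b : B) (u : spanObj g h hg a ⟶ b) :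
    spanObj g h hg (spanP g h hg hh a b u) = b := by
  rw [spanObj, spanP, gInv_obj]
  exact hh.obj_liftSigma _ b u

theorem spanP_id (a : A) : spanP g h hg hh a (spanObj g h hg a) (𝟙 _) = a := by
  change g.obj (hh.liftSigma (gInv g hg a) _ (𝟙 _)).1 = a
  rw [hh.liftSigma_id]
  exact gInv_spec g hg a

theorem spanLift_id (a : A) :
    spanLift g h hg hh a (spanObj g h hg a) (𝟙 _) ≫ eqToHom (spanP_id g h hg hh a) =
      𝟙 a := by
  refine (spanLift_comp_eqToHom_of_eq g h hg hh _ _ _ (hh.liftSigma_id (gInv g hg a)) _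
    (gInv_spec g hg a)).trans ?_
  simp

theorem spanChosen_comp (a : A) (b b' : B) (u : spanObj g h hg a ⟶ b) (v : b ⟶ b')
    (e : spanObj g h hg (spanP g h hg hh a b u) = b) :
    spanChosen g h hg hh a b' (u ≫ v) =
      ⟨(spanChosen g h hg hh (spanP g h hg hh a b u) b' (eqToHom e ≫ v)).1,
        (spanChosen g h hg hh a b u).2 ≫
          (eqToHom (gInv_obj g hg _).symm :
            _ ⟶ gInv g hg (spanP g h hg hh a b u)) ≫
          (spanChosen g h hg hh (spanP g h hg hh a b u) b' (eqToHom e ≫ v)).2⟩ :=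
  hh.liftSigma_comp u v _ e

theorem spanP_comp (a : A) (b b' : B) (u : spanObj g h hg a ⟶ b) (v : b ⟶ b')
    (e : spanObj g h hg (spanP g h hg hh a b u) = b) :
    spanP g h hg hh a b' (u ≫ v) =
      spanP g h hg hh (spanP g h hg hh a b u) b' (eqToHom e ≫ v) := by
  rw [spanP, spanChosen_comp g h hg hh a b b' u v e]; rfl

theorem spanLift_comp (a : A) (b b' : B) (u : spanObj g h hg a ⟶ b) (v : b ⟶ b')
    (e : spanObj g h hg (spanP g h hg hh a b u) = b) :
    spanLift g h hg hh a b' (u ≫ v) ≫ eqToHom (spanP_comp g h hg hh a b b' u v e) =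
      spanLift g h hg hh a b u ≫
        spanLift g h hg hh (spanP g h hg hh a b u) b' (eqToHom e ≫ v) := by
  refine (spanLift_comp_eqToHom_of_eq g h hg hh _ _ _ (spanChosen_comp g h hg hh a b b' u v e) _
    rfl).trans ?_
  rw [eqToHom_refl, Category.comp_id, Functor.map_comp, Functor.map_comp]
  exact (congrArg (fun f => _ ≫ _ ≫ f ≫ _) (eqToHom_map g _)).trans
    (Category.assoc _ _ _).symm

noncomputable def spanCofunctor : Cofunctor B A where
  obj := spanObj g h hg
  p := spanP g h hg hh
  lift := spanLift g h hg hh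
  obj_p := spanObj_spanP g h hg hh
  p_id := spanP_id g h hg hh
  lift_id := spanLift_id g h hg hh
  p_comp a b b' u v := spanP_comp g h hg hh a b b' u v _
  lift_comp a b b' u v := spanLift_comp g h hg hh a b b' u v _

end Span

/-- Given a functor `g : X ⥤ A` which is bijective on objects and a discrete opfibration
`h : X ⥤ B`, the data `(φ₀, p, φ)` defined from the unique `h`-lifts is a cofunctor
`B ⇸ A`. -/
theorem span_cofunctor (g : X ⥤ A) (h : X ⥤ B) (hg : Function.Bijective g.obj)
    (hh : IsDiscreteOpfibration h) :
    ∃ ψ : Cofunctor B A,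
      ψ.obj = spanObj g h hg ∧
      HEq ψ.p (spanP g h hg hh) ∧
      HEq ψ.lift (spanLift g h hg hh) :=
  ⟨spanCofunctor g h hg hh, rfl, HEq.rfl, HEq.rfl⟩
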